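/- For p(λ) = -(JᵀJ + λI)⁻¹Jᵀr with λ > 0, the function λ ↦ ‖r + J p(λ)‖² is monotonically nondecreasing in λ. -/

import Mathlib

open Matrix Finset

noncomputable def _root_.enorm {n : ℕ} (v : Fin n → ℝ) : ℝ := Real.sqrt (∑ i, v i ^ 2)

noncomputable def specNorm {n : ℕ} (A : Matrix (Fin n) (Fin n) ℝ) : ℝ :=
  sSup ((fun v => _root_.enorm (A.mulVec v)) '' {v | _root_.enorm v ≤ 1})

noncomputable def pstep {n : ℕ} (J : Matrix (Fin n) (Fin n) ℝ) (r : Fin n → ℝ) (lam : ℝ) :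
    Fin n → ℝ :=
  -((Jᵀ * J + lam • (1 : Matrix (Fin n) (Fin n) ℝ))⁻¹.mulVec (Jᵀ.mulVec r))

lemma enorm_eq_norm {n : ℕ} (v : Fin n → ℝ) :
    _root_.enorm v = ‖(WithLp.equiv 2 (Fin n → ℝ)).symm v‖ := by
  rw [EuclideanSpace.norm_eq]
  simp [_root_.enorm, Real.norm_eq_abs, sq_abs]

lemma enorm_nonneg' {n : ℕ} (v : Fin n → ℝ) : 0 ≤ _root_.enorm v := by
  rw [enorm_eq_norm]; exact norm_nonneg _

lemma enorm_add_le' {n : ℕ} (a b : Fin n → ℝ) : _root_.enorm (a + b) ≤ _root_.enorm a + _root_.enorm b := by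
  simp only [enorm_eq_norm]
  rw [WithLp.equiv_symm_apply, WithLp.toLp_add]
  exact norm_add_le _ _

lemma enorm_smul' {n : ℕ} (c : ℝ) (a : Fin n → ℝ) : _root_.enorm (c • a) = |c| * _root_.enorm a := by
  simp only [enorm_eq_norm, WithLp.equiv_symm_apply, WithLp.toLp_smul, norm_smul, Real.norm_eq_abs]

lemma dot_le_enorm {n : ℕ} (a b : Fin n → ℝ) : a ⬝ᵥ b ≤ _root_.enorm a * _root_.enorm b := by
  simp only [enorm_eq_norm]
  have := real_inner_le_norm ((WithLp.equiv 2 (Fin n → ℝ)).symm a)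
    ((WithLp.equiv 2 (Fin n → ℝ)).symm b)
  rwa [WithLp.equiv_symm_apply, EuclideanSpace.inner_toLp_toLp, star_trivial, dotProduct_comm] at this

lemma enorm_sq_eq_dot {n : ℕ} (v : Fin n → ℝ) : _root_.enorm v ^ 2 = v ⬝ᵥ v := by
  have h : 0 ≤ ∑ i, v i ^ 2 := Finset.sum_nonneg fun i _ => sq_nonneg _
  rw [_root_.enorm, Real.sq_sqrt h, dotProduct]
  simp [sq]

lemma smul_one_posDef {n : ℕ} {lam : ℝ} (h : 0 < lam) :
    (lam • (1 : Matrix (Fin n) (Fin n) ℝ)).PosDef := by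
  exact Matrix.PosDef.one.smul h

lemma shifted_posDef {n : ℕ} {S : Matrix (Fin n) (Fin n) ℝ} (hS : S.PosSemidef) {lam : ℝ}
    (h : 0 < lam) : (S + lam • (1 : Matrix (Fin n) (Fin n) ℝ)).PosDef :=
  Matrix.PosDef.posSemidef_add hS (smul_one_posDef h)

lemma mulVec_inv_cancel {n : ℕ} {M : Matrix (Fin n) (Fin n) ℝ} (hM : IsUnit M)
    (x : Fin n → ℝ) : M.mulVec (M⁻¹.mulVec x) = x := by
  rw [Matrix.mulVec_mulVec, Matrix.mul_nonsing_inv _ ((Matrix.isUnit_iff_isUnit_det M).1 hM),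
    Matrix.one_mulVec]

lemma inv_mulVec_cancel {n : ℕ} {M : Matrix (Fin n) (Fin n) ℝ} (hM : IsUnit M)
    (x : Fin n → ℝ) : M⁻¹.mulVec (M.mulVec x) = x := by
  rw [Matrix.mulVec_mulVec, Matrix.nonsing_inv_mul _ ((Matrix.isUnit_iff_isUnit_det M).1 hM),
    Matrix.one_mulVec]

/-- Key contraction estimate: for `S` PSD and `lam > 0`,
`lam * ‖(S + lam I)⁻¹ x‖ ≤ ‖x‖`. -/
lemma contraction {n : ℕ} {S : Matrix (Fin n) (Fin n) ℝ} (hS : S.PosSemidef) {lam : ℝ}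
    (h : 0 < lam) (x : Fin n → ℝ) :
    lam * _root_.enorm ((S + lam • (1 : Matrix (Fin n) (Fin n) ℝ))⁻¹.mulVec x) ≤ _root_.enorm x := by
  set M := S + lam • (1 : Matrix (Fin n) (Fin n) ℝ) with hMdef
  have hM : M.PosDef := shifted_posDef hS h
  set y := M⁻¹.mulVec x with hy
  have hxy : M.mulVec y = x := mulVec_inv_cancel hM.isUnit x
  have hSy : 0 ≤ y ⬝ᵥ S.mulVec y := by
    have := hS.dotProduct_mulVec_nonneg y
    simpa using this
  have h1 : lam * (y ⬝ᵥ y) ≤ x ⬝ᵥ y := by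
    rw [← hxy, hMdef]
    rw [Matrix.add_mulVec, add_dotProduct]
    have h2 : (lam • (1 : Matrix (Fin n) (Fin n) ℝ)).mulVec y ⬝ᵥ y = lam * (y ⬝ᵥ y) := by
      simp [Matrix.smul_mulVec, Matrix.one_mulVec, smul_dotProduct]
    rw [h2]
    have h3 : S.mulVec y ⬝ᵥ y = y ⬝ᵥ S.mulVec y := dotProduct_comm _ _
    linarith [hSy, h3.ge, h3.le]
  have h2 : x ⬝ᵥ y ≤ _root_.enorm x * _root_.enorm y := dot_le_enorm x y
  have h3 : lam * _root_.enorm y ^ 2 ≤ _root_.enorm x * _root_.enorm y := by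
    rw [enorm_sq_eq_dot]; linarith
  rcases eq_or_lt_of_le (enorm_nonneg' y) with h0 | h0
  · rw [← h0, mul_zero]; exact enorm_nonneg' x
  · have := mul_le_mul_of_nonneg_right (le_refl (_root_.enorm x)) h0.le
    nlinarith [sq_nonneg (_root_.enorm y)]

lemma transpose_eq_conjTranspose {n : ℕ} (J : Matrix (Fin n) (Fin n) ℝ) : Jᵀ = Jᴴ := by
  ext i j; simp [Matrix.conjTranspose]

/-- The residual identity: `r + J p(lam) = lam (J Jᵀ + lam I)⁻¹ r`. -/
lemma resid_eq {n : ℕ} (J : Matrix (Fin n) (Fin n) ℝ) (r : Fin n → ℝ) {lam : ℝ} (h : 0 < lam) :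
    r + J.mulVec (pstep J r lam) =
      lam • ((J * Jᵀ + lam • (1 : Matrix (Fin n) (Fin n) ℝ))⁻¹.mulVec r) := by
  have hA : (Jᵀ * J).PosSemidef := by
    rw [transpose_eq_conjTranspose]
    exact Matrix.posSemidef_conjTranspose_mul_self J
  have hB : (J * Jᵀ).PosSemidef := by
    rw [transpose_eq_conjTranspose]
    exact Matrix.posSemidef_self_mul_conjTranspose J
  set A := Jᵀ * J + lam • (1 : Matrix (Fin n) (Fin n) ℝ) with hAdef
  set B := J * Jᵀ + lam • (1 : Matrix (Fin n) (Fin n) ℝ) with hBdef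
  have hAu : IsUnit A := (shifted_posDef hA h).isUnit
  have hBu : IsUnit B := (shifted_posDef hB h).isUnit
  have hBJ : B * J = J * A := by
    rw [hAdef, hBdef]
    simp [Matrix.add_mul, Matrix.mul_add, Matrix.mul_assoc, Matrix.mul_smul, Matrix.smul_mul]
  have hkey : 1 - J * A⁻¹ * Jᵀ = lam • B⁻¹ := by
    have hABc : B * (1 - J * A⁻¹ * Jᵀ) = lam • 1 := by
      have : B * (J * A⁻¹ * Jᵀ) = J * Jᵀ := by
        calc B * (J * A⁻¹ * Jᵀ) = (B * J) * A⁻¹ * Jᵀ := by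
              simp only [Matrix.mul_assoc]
          _ = J * (A * A⁻¹) * Jᵀ := by rw [hBJ]; simp only [Matrix.mul_assoc]
          _ = J * Jᵀ := by
              rw [Matrix.mul_nonsing_inv _ ((Matrix.isUnit_iff_isUnit_det A).1 hAu)]
              simp
      rw [Matrix.mul_sub, Matrix.mul_one, this, hBdef]
      abel
    have := congrArg (fun X => B⁻¹ * X) hABc
    simp only [← Matrix.mul_assoc] at this
    rw [Matrix.nonsing_inv_mul _ ((Matrix.isUnit_iff_isUnit_det B).1 hBu), Matrix.one_mul] at this
    rw [this, Matrix.mul_smul, Matrix.mul_one]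
  have hres : r + J.mulVec (pstep J r lam) = (1 - J * A⁻¹ * Jᵀ).mulVec r := by
    rw [pstep, ← hAdef, Matrix.mulVec_neg, Matrix.sub_mulVec, Matrix.one_mulVec]
    rw [Matrix.mulVec_mulVec, Matrix.mulVec_mulVec]
    ring_nf
  rw [hres, hkey, Matrix.smul_mulVec]

theorem stmt_3 {n : ℕ} (J : Matrix (Fin n) (Fin n) ℝ) (r : Fin n → ℝ) :
    ∀ lam₁ lam₂ : ℝ, 0 < lam₁ → lam₁ ≤ lam₂ →
      _root_.enorm (r + J.mulVec (pstep J r lam₁)) ^ 2 ≤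
        _root_.enorm (r + J.mulVec (pstep J r lam₂)) ^ 2 := by
  intro lam₁ lam₂ h1 h12
  have h2 : 0 < lam₂ := lt_of_lt_of_le h1 h12
  have hB : (J * Jᵀ).PosSemidef := by
    rw [transpose_eq_conjTranspose]
    exact Matrix.posSemidef_self_mul_conjTranspose J
  set S := J * Jᵀ with hSdef
  set M₁ := S + lam₁ • (1 : Matrix (Fin n) (Fin n) ℝ) with hM1
  set M₂ := S + lam₂ • (1 : Matrix (Fin n) (Fin n) ℝ) with hM2
  have hM1u : IsUnit M₁ := (shifted_posDef hB h1).isUnit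
  have hM2u : IsUnit M₂ := (shifted_posDef hB h2).isUnit
  set y₁ := M₁⁻¹.mulVec r with hy1
  set y₂ := M₂⁻¹.mulVec r with hy2
  rw [resid_eq J r h1, resid_eq J r h2, ← hSdef, ← hM1, ← hM2, ← hy1, ← hy2]
  -- relation : y₁ = y₂ + (lam₂ - lam₁) • M₁⁻¹.mulVec y₂
  have hrel : y₁ = y₂ + (lam₂ - lam₁) • M₁⁻¹.mulVec y₂ := by
    have hr2 : M₂.mulVec y₂ = r := mulVec_inv_cancel hM2u r
    have hM21 : M₂ = M₁ + (lam₂ - lam₁) • (1 : Matrix (Fin n) (Fin n) ℝ) := by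
      rw [hM1, hM2]
      rw [add_assoc, ← add_smul]
      ring_nf
    have : M₁.mulVec (y₂ + (lam₂ - lam₁) • M₁⁻¹.mulVec y₂) = r := by
      rw [Matrix.mulVec_add, Matrix.mulVec_smul, mulVec_inv_cancel hM1u,
        ← hr2, hM21]
      simp [hM1, Matrix.add_mulVec, Matrix.smul_mulVec, Matrix.one_mulVec]
    rw [hy1, ← this, inv_mulVec_cancel hM1u]
  -- norms
  have key : _root_.enorm (lam₁ • y₁) ≤ _root_.enorm (lam₂ • y₂) := by
    have e1 : lam₁ • y₁ = lam₁ • y₂ + (lam₁ * (lam₂ - lam₁)) • M₁⁻¹.mulVec y₂ := by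
      rw [hrel, smul_add, smul_smul]
    have contr : lam₁ * _root_.enorm (M₁⁻¹.mulVec y₂) ≤ _root_.enorm y₂ := contraction hB h1 y₂
    have t1 : _root_.enorm (lam₁ • y₁) ≤ _root_.enorm (lam₁ • y₂) +
        _root_.enorm ((lam₁ * (lam₂ - lam₁)) • M₁⁻¹.mulVec y₂) := by
      rw [e1]; exact enorm_add_le' _ _
    simp only [enorm_smul'] at t1 ⊢
    rw [abs_of_pos h1, abs_of_nonneg (by nlinarith : (0:ℝ) ≤ lam₁ * (lam₂ - lam₁))] at t1
    rw [abs_of_pos h1, abs_of_pos h2]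
    have t2 : lam₁ * (lam₂ - lam₁) * _root_.enorm (M₁⁻¹.mulVec y₂) ≤ (lam₂ - lam₁) * _root_.enorm y₂ := by
      have := mul_le_mul_of_nonneg_left contr (by linarith : (0:ℝ) ≤ lam₂ - lam₁)
      nlinarith [enorm_nonneg' (M₁⁻¹.mulVec y₂)]
    nlinarith [enorm_nonneg' y₂]
  have h0 : 0 ≤ _root_.enorm (lam₁ • y₁) := enorm_nonneg' _
  nlinarith [key, h0, enorm_nonneg' (lam₂ • y₂)]
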